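/- arXiv:1606.05530 — 2 statements merged into one kernel-verified Lean document; each statement's English description precedes it below -/
import Mathlib

section
/- Two distinct lines of PG(3,q) meet in a point if and only if their images under the Klein correspondence are collinear on the quadric, i.e., the bilinear form associated to the quadratic form p01*p23 - p02*p13 + p03*p12 vanishes on the pair of Plücker coordinate vectors. -/
/-- The Plücker coordinates of the pair (u,v): pij = u_i v_j - u_j v_i, 0 ≤ i < j ≤ 3. -/
def plucker {F : Type*} [Field F] (u v : Fin 4 → F) : Fin 6 → F :=
  ![u 0 * v 1 - u 1 * v 0, u 0 * v 2 - u 2 * v 0, u 0 * v 3 - u 3 * v 0,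
    u 1 * v 2 - u 2 * v 1, u 1 * v 3 - u 3 * v 1, u 2 * v 3 - u 3 * v 2]

/-- The quadratic form Q(p) = p01*p23 - p02*p13 + p03*p12 of the Klein quadric. -/
def kleinForm {F : Type*} [Field F] (p : Fin 6 → F) : F :=
  p 0 * p 5 - p 1 * p 4 + p 2 * p 3

/-- The associated bilinear form B(p,p') = Q(p+p') - Q(p) - Q(p'). -/
def kleinBilin {F : Type*} [Field F] (p p' : Fin 6 → F) : F :=
  kleinForm (p + p') - kleinForm p - kleinForm p'

/-!
The bilinear form `B(p(u₁, v₁), p(u₂, v₂))` is the Laplace expansion, along the first two rows,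
of `det [u₁; v₁; u₂; v₂]`. This determinant is nonzero iff the four vectors span `F⁴`, i.e. iff
`W₁ ⊔ W₂ = ⊤`, and since `dim (W₁ ⊔ W₂) + dim (W₁ ⊓ W₂) = 2 + 2 = 4` this happens iff `W₁ ⊓ W₂ = ⊥`.
-/

theorem Submodule.inf_eq_bot_iff_sup_eq_top_of_finrank_add_eq {K V : Type*} [DivisionRing K]
    [AddCommGroup V] [Module K V] [FiniteDimensional K V] {W₁ W₂ : Submodule K V}
    (h : Module.finrank K W₁ + Module.finrank K W₂ = Module.finrank K V) :
    W₁ ⊓ W₂ = ⊥ ↔ W₁ ⊔ W₂ = ⊤ := by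
  have hsum := Submodule.finrank_sup_add_finrank_inf_eq W₁ W₂
  have hle := Submodule.finrank_le (W₁ ⊔ W₂)
  rw [← Submodule.finrank_eq_zero, Submodule.eq_top_iff_finrank_eq]
  omega

theorem Matrix.span_range_eq_top_iff_det_ne_zero {K n : Type*} [Field K] [Fintype n]
    [DecidableEq n] (A : Matrix n n K) :
    Submodule.span K (Set.range A) = ⊤ ↔ A.det ≠ 0 := by
  change Submodule.span K (Set.range A.row) = ⊤ ↔ _
  rw [← range_vecMulLinear, LinearMap.range_eq_top, Matrix.coe_vecMulLinear,
    Matrix.vecMul_surjective_iff_isUnit, Matrix.isUnit_iff_isUnit_det, isUnit_iff_ne_zero]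

theorem Submodule.span_range_vecCons_four {R M : Type*} [Semiring R] [AddCommMonoid M]
    [Module R M] (u₁ v₁ u₂ v₂ : M) :
    Submodule.span R (Set.range ![u₁, v₁, u₂, v₂]) =
      Submodule.span R {u₁, v₁} ⊔ Submodule.span R {u₂, v₂} := by
  rw [← Submodule.span_union, Matrix.range_cons, Matrix.range_cons, Matrix.range_cons,
    Matrix.range_cons, Matrix.range_empty]
  simp only [Set.union_empty, Set.singleton_union, Set.insert_union]

theorem kleinBilin_plucker_eq_det {F : Type*} [Field F] (u₁ v₁ u₂ v₂ : Fin 4 → F) :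
    kleinBilin (plucker u₁ v₁) (plucker u₂ v₂) = (Matrix.of ![u₁, v₁, u₂, v₂]).det := by
  simp [kleinBilin, kleinForm, plucker, Matrix.det_succ_row_zero, Fin.sum_univ_succ,
    Fin.succAbove]
  ring

theorem stmt_2_general (F : Type*) [Field F]
    (W₁ W₂ : Submodule F (Fin 4 → F))
    (hW₁ : Module.finrank F W₁ = 2) (hW₂ : Module.finrank F W₂ = 2)
    (u₁ v₁ u₂ v₂ : Fin 4 → F)
    (h₁ : Submodule.span F {u₁, v₁} = W₁)
    (h₂ : Submodule.span F {u₂, v₂} = W₂) :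
    W₁ ⊓ W₂ ≠ ⊥ ↔ kleinBilin (plucker u₁ v₁) (plucker u₂ v₂) = 0 := by
  have hdim : Module.finrank F W₁ + Module.finrank F W₂ = Module.finrank F (Fin 4 → F) := by
    simp [hW₁, hW₂]
  rw [Ne, Submodule.inf_eq_bot_iff_sup_eq_top_of_finrank_add_eq hdim, ← h₁, ← h₂,
    ← Submodule.span_range_vecCons_four, kleinBilin_plucker_eq_det]
  exact not_iff_comm.mpr
    (Matrix.span_range_eq_top_iff_det_ne_zero (Matrix.of ![u₁, v₁, u₂, v₂])).symm

/-- Two distinct lines of PG(3,q) meet in a point (their intersection as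
subspaces is nonzero) if and only if the bilinear form associated to the Klein quadratic
form vanishes on the pair of Plücker coordinate vectors of the two lines. -/
theorem stmt_2 (F : Type*) [Field F]
    (W₁ W₂ : Submodule F (Fin 4 → F))
    (hW₁ : Module.finrank F W₁ = 2) (hW₂ : Module.finrank F W₂ = 2) (hne : W₁ ≠ W₂)
    (u₁ v₁ u₂ v₂ : Fin 4 → F)
    (hu₁ : u₁ ∈ W₁) (hv₁ : v₁ ∈ W₁) (h₁ : Submodule.span F {u₁, v₁} = W₁)
    (hu₂ : u₂ ∈ W₂) (hv₂ : v₂ ∈ W₂) (h₂ : Submodule.span F {u₂, v₂} = W₂) :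
    W₁ ⊓ W₂ ≠ ⊥ ↔ kleinBilin (plucker u₁ v₁) (plucker u₂ v₂) = 0 :=
  stmt_2_general F W₁ W₂ hW₁ hW₂ u₁ v₁ u₂ v₂ h₁ h₂
end

section
/- The generalised quadrangle T_2(O) of Tits, constructed from a conic O in a hyperplane PG(2,q) of PG(3,q), is a generalised quadrangle of order (q,q): it has (q+1)(q^2+1) points and (q+1)(q^2+1) lines, each line has q+1 points, each point is on q+1 lines, and for every point P not on a line l there is a unique point of l collinear with P. -/
variable {F : Type*} [Field F]

/-- `l` is a tangent line of the point set `O` inside the plane `H`: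
a line of `H` meeting `O` in exactly one point. -/
def IsTangentLine (O : Set (Submodule F (Fin 4 → F))) (H l : Submodule F (Fin 4 → F)) :
    Prop :=
  Module.finrank F l = 2 ∧ l ≤ H ∧ ∃! P, P ∈ O ∧ P ≤ l

/-- The points of the Tits generalised quadrangle T_2(O): (i) points of PG(3,q) not in the
hyperplane H, (ii) planes not contained in H meeting H in a tangent line of O, (iii) H. -/
def T2Point (O : Set (Submodule F (Fin 4 → F))) (H W : Submodule F (Fin 4 → F)) : Prop :=
  (Module.finrank F W = 1 ∧ ¬ W ≤ H) ∨
  (Module.finrank F W = 3 ∧ W ≠ H ∧ IsTangentLine O H (W ⊓ H)) ∨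
  W = H

/-- The lines of T_2(O): (a) lines of PG(3,q) not in H meeting H in a point of O,
(b) the points of O. -/
def T2Line (O : Set (Submodule F (Fin 4 → F))) (H l : Submodule F (Fin 4 → F)) : Prop :=
  (Module.finrank F l = 2 ∧ ¬ l ≤ H ∧ (l ⊓ H) ∈ O) ∨ l ∈ O

/-- Incidence in T_2(O): symmetrised containment. -/
def T2Inc (W l : Submodule F (Fin 4 → F)) : Prop := W ≤ l ∨ l ≤ W

/-!
Projective points, lines and planes of `PG(3, q)` are the subspaces of `F⁴` of rank 1, 2 and 3.
Through each point `P` of the oval `O` there is a unique tangent `t_P` in `H`: of the `q + 1`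
lines of `H` through `P`, exactly `q` join it to another point of `O`, since no three points of
`O` are collinear.

The counts reduce to counting the subspaces of rank `k + 1` lying between a subspace `P` of
rank `k` and a subspace `U`; they are the points of the projective space of `U ⧸ P`. A line `l`
of type (a) through `P ∈ O` carries its `q` affine points and the plane `l ⊔ t_P`; a point
`P ∈ O`, seen as a line, carries the `q` planes through `t_P` other than `H`, and `H` itself.

For the quadrangle axiom, collinearity with the points of such a line is decided geometrically:
two affine points are collinear iff the line joining them meets `O`, an affine point and a
tangent plane iff the point lies in the plane, two tangent planes iff they have the same tangent
line, and `H` is collinear with every tangent plane but with no affine point. In each of the five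
cases exactly one point of the line passes the test.
-/

open Module Finset

section Cardinality

variable {α : Type*} {p r : α → Prop}

lemma card_subtype_or_of_disjoint [Finite α] (h : ∀ x, p x → ¬ r x) :
    Nat.card {x // p x ∨ r x} = Nat.card {x // p x} + Nat.card {x // r x} := by
  classical
  rw [Nat.card_congr (subtypeOrEquiv p r fun _ hp hr x hx => h x (hp x hx) (hr x hx)),
    Nat.card_sum]

lemma card_subtype_and_add_card_subtype_and_not [Finite α] :
    Nat.card {x // p x ∧ r x} + Nat.card {x // p x ∧ ¬ r x} = Nat.card {x // p x} := by
  rw [← card_subtype_or_of_disjoint fun x h h' => h'.2 h.2]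
  exact Nat.card_congr (Equiv.subtypeEquivRight fun x => by tauto)

lemma card_subtype_of_iff_eq {a : α} (h : ∀ x, p x ↔ x = a) : Nat.card {x // p x} = 1 :=
  (Nat.card_congr (Equiv.subtypeEquivRight h)).trans Nat.card_unique

lemma card_subtype_and_not_add_one [Finite α] {a : α} (h : ∀ x, p x ∧ r x ↔ x = a) :
    Nat.card {x // p x ∧ ¬ r x} + 1 = Nat.card {x // p x} := by
  rw [← card_subtype_of_iff_eq h, add_comm]
  exact card_subtype_and_add_card_subtype_and_not

lemma card_eq_mul_of_card_fiber [Finite α] {β : Type*} [Finite β] (f : α → β) {c : ℕ}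
    (h : ∀ b, Nat.card {a // f a = b} = c) : Nat.card α = Nat.card β * c := by
  have := Fintype.ofFinite β
  rw [← Nat.card_congr (Equiv.sigmaFiberEquiv f), Nat.card_sigma,
    Finset.sum_congr rfl fun b _ => h b, Finset.sum_const, smul_eq_mul, Finset.card_univ,
    Nat.card_eq_fintype_card]

lemma existsUnique_of_card_subtype_eq_one {α : Type*} {p : α → Prop}
    (h : Nat.card {x // p x} = 1) : ∃! x, p x := by
  obtain ⟨⟨a, ha⟩, hunique⟩ := Nat.card_eq_one_iff_exists.1 h
  exact ⟨a, ha, fun b hb => congrArg Subtype.val (hunique ⟨b, hb⟩)⟩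

end Cardinality

section Subspaces

variable {K V : Type*} [Field K] [AddCommGroup V] [Module K V] [FiniteDimensional K V]
  {H U W l x y : Submodule K V}

lemma finrank_sup_of_finrank_eq_one (hx : finrank K x = 1) (h : ¬ x ≤ U) :
    finrank K ↥(x ⊔ U) = finrank K U + 1 := by
  have hle : finrank K ↥(x ⊓ U) ≤ 1 := hx ▸ Submodule.finrank_mono inf_le_left
  have hne : finrank K ↥(x ⊓ U) ≠ 1 := fun h1 =>
    h (Submodule.eq_of_le_of_finrank_eq inf_le_left (h1.trans hx.symm) ▸ inf_le_right)
  have := Submodule.finrank_sup_add_finrank_inf_eq x U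
  omega

lemma not_le_of_finrank_eq_of_ne (h : finrank K x = finrank K y) (hxy : x ≠ y) : ¬ x ≤ y :=
  fun hle => hxy (Submodule.eq_of_le_of_finrank_eq hle h)

lemma finrank_sup_eq_two_of_ne (hx : finrank K x = 1) (hy : finrank K y = 1) (hxy : x ≠ y) :
    finrank K ↥(x ⊔ y) = 2 := by
  rw [finrank_sup_of_finrank_eq_one hx (not_le_of_finrank_eq_of_ne (hx.trans hy.symm) hxy), hy]

lemma eq_sup_of_finrank_eq_two (hx : finrank K x = 1) (hy : finrank K y = 1) (hxy : x ≠ y)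
    (hl : finrank K l = 2) (hxl : x ≤ l) (hyl : y ≤ l) : l = x ⊔ y :=
  (Submodule.eq_of_le_of_finrank_eq (sup_le hxl hyl)
    ((finrank_sup_eq_two_of_ne hx hy hxy).trans hl.symm)).symm

lemma le_of_le_sup (hl : finrank K l = 2) (hx : finrank K x = 1) (hy : finrank K y = 1)
    (h : l ≤ x ⊔ y) : x ≤ l := by
  have := Submodule.finrank_add_le_finrank_add_finrank x y
  exact (Submodule.eq_of_le_of_finrank_le h (by omega)).ge.trans' le_sup_left

lemma finrank_inf_add_one_of_not_le (hH : finrank K H + 1 = finrank K V) (hU : ¬ U ≤ H) :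
    finrank K ↥(U ⊓ H) + 1 = finrank K U := by
  have hlt : finrank K H < finrank K ↥(U ⊔ H) :=
    Submodule.finrank_lt_finrank_of_lt
      (lt_of_le_not_ge le_sup_right fun h => hU (le_sup_left.trans h))
  have := Submodule.finrank_le (U ⊔ H)
  have := Submodule.finrank_sup_add_finrank_inf_eq U H
  omega

lemma inf_eq_of_le_of_le (hH : finrank K H + 1 = finrank K V) (hU : ¬ U ≤ H) (hWU : W ≤ U)
    (hWH : W ≤ H) (hW : finrank K W + 1 = finrank K U) : U ⊓ H = W := by
  have := finrank_inf_add_one_of_not_le hH hU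
  exact (Submodule.eq_of_le_of_finrank_eq (le_inf hWU hWH) (by omega)).symm

lemma finrank_ker_proj {n : ℕ} (i : Fin (n + 1)) :
    finrank K (LinearMap.ker (LinearMap.proj i : (Fin (n + 1) → K) →ₗ[K] K)) = n := by
  have := LinearMap.finrank_range_add_finrank_ker (LinearMap.proj i : (Fin (n + 1) → K) →ₗ[K] K)
  rw [LinearMap.range_eq_top.2 (LinearMap.proj_surjective i), finrank_top, finrank_self,
    finrank_fin_fun] at this
  omega

end Subspaces

section Counting

variable {K V : Type*} [Field K] [AddCommGroup V] [Module K V]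

lemma card_finrank_eq_one [Fintype K] :
    Nat.card {W : Submodule K V // finrank K W = 1} =
      ∑ i ∈ range (finrank K V), Fintype.card K ^ i := by
  rw [← Nat.card_congr (Projectivization.equivSubmodule K V),
    Projectivization.card_of_finrank K V rfl, Nat.card_eq_fintype_card]

variable [FiniteDimensional K V]

lemma finrank_map_mkQ_add {P W : Submodule K V} (h : P ≤ W) :
    finrank K ↥(W.map P.mkQ) + finrank K P = finrank K W := by
  have := LinearMap.finrank_range_add_finrank_ker (P.mkQ.comp W.subtype)
  rwa [LinearMap.range_comp, Submodule.range_subtype, LinearMap.ker_comp, Submodule.ker_mkQ,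
    LinearEquiv.finrank_eq (Submodule.comapSubtypeEquivOfLe h)] at this

noncomputable def coversEquivFinrankEqOneQuotient (P : Submodule K V) :
    {W : Submodule K V // finrank K W = finrank K P + 1 ∧ P ≤ W} ≃
      {W : Submodule K (V ⧸ P) // finrank K W = 1} where
  toFun W := ⟨W.1.map P.mkQ, by have := finrank_map_mkQ_add W.2.2; omega⟩
  invFun W := ⟨W.1.comap P.mkQ, by
    have hle : P ≤ W.1.comap P.mkQ := (Submodule.ker_mkQ P).ge.trans (LinearMap.ker_le_comap _)
    have := finrank_map_mkQ_add hle
    rw [Submodule.map_comap_eq_of_surjective P.mkQ_surjective, W.2] at this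
    exact ⟨by omega, hle⟩⟩
  left_inv W := Subtype.ext <| by
    simp only [Submodule.comap_map_eq, Submodule.ker_mkQ, sup_eq_left.2 W.2.2]
  right_inv W := Subtype.ext <| Submodule.map_comap_eq_of_surjective P.mkQ_surjective _

noncomputable def restrictEquiv {P U : Submodule K V} (hPU : P ≤ U) (k : ℕ) :
    {W : Submodule K V // finrank K W = k ∧ P ≤ W ∧ W ≤ U} ≃
      {W : Submodule K U // finrank K W = k ∧ P.comap U.subtype ≤ W} where
  toFun W := ⟨W.1.comap U.subtype, by
    rw [LinearEquiv.finrank_eq (Submodule.comapSubtypeEquivOfLe W.2.2.2)]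
    exact ⟨W.2.1, Submodule.comap_mono W.2.2.1⟩⟩
  invFun W := ⟨W.1.map U.subtype, by
    refine ⟨(Submodule.finrank_map_subtype_eq _ _).trans W.2.1, ?_, Submodule.map_subtype_le _ _⟩
    simpa [Submodule.map_comap_subtype, inf_eq_right.2 hPU] using
      Submodule.map_mono (f := U.subtype) W.2.2⟩
  left_inv W := Subtype.ext <| by
    simp only [Submodule.map_comap_subtype, inf_eq_right.2 W.2.2.2]
  right_inv W := Subtype.ext <| Submodule.comap_map_eq_of_injective U.injective_subtype _

variable [Fintype K]

instance Submodule.finite_of_finite_field : Finite (Submodule K V) :=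
  have := Module.finite_of_finite K (M := V)
  Finite.of_injective _ SetLike.coe_injective

lemma card_finrank_eq_of_le_of_le {P U : Submodule K V} {k n : ℕ} (hPU : P ≤ U)
    (hk : finrank K P + 1 = k) (hn : finrank K P + n = finrank K U) :
    Nat.card {W : Submodule K V // finrank K W = k ∧ P ≤ W ∧ W ≤ U} =
      ∑ i ∈ range n, Fintype.card K ^ i := by
  set P' := P.comap U.subtype
  have hP' : finrank K P' = finrank K P :=
    LinearEquiv.finrank_eq (Submodule.comapSubtypeEquivOfLe hPU)
  have hquot := Submodule.finrank_quotient_add_finrank P'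
  rw [Nat.card_congr ((restrictEquiv hPU k).trans ((Equiv.subtypeEquivRight fun W => by
      rw [hP', hk]).trans (coversEquivFinrankEqOneQuotient P'))), card_finrank_eq_one]
  congr 2
  omega

lemma card_finrank_eq_one_le {U : Submodule K V} {n : ℕ} (hU : finrank K U = n) :
    Nat.card {W : Submodule K V // finrank K W = 1 ∧ W ≤ U} =
      ∑ i ∈ range n, Fintype.card K ^ i :=
  (Nat.card_congr (Equiv.subtypeEquivRight fun W => by simp)).trans
    (card_finrank_eq_of_le_of_le (U := U) (k := 1) bot_le (by simp) (by simp [hU]))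

lemma card_finrank_eq_ge {P : Submodule K V} {k n : ℕ} (hk : finrank K P + 1 = k)
    (hn : finrank K P + n = finrank K V) :
    Nat.card {W : Submodule K V // finrank K W = k ∧ P ≤ W} =
      ∑ i ∈ range n, Fintype.card K ^ i :=
  (Nat.card_congr (Equiv.subtypeEquivRight fun W => by simp)).trans
    (card_finrank_eq_of_le_of_le (U := ⊤) le_top hk (by rw [finrank_top, hn]))

end Counting

section ProjectiveSpace

variable {K V : Type*} [Field K] [Fintype K] [AddCommGroup V] [Module K V]
  [FiniteDimensional K V] {H P l σ t : Submodule K V}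

lemma card_finrank_eq_one_not_le (hV : finrank K V = 4) (hH : finrank K H = 3) :
    Nat.card {x : Submodule K V // finrank K x = 1 ∧ ¬ x ≤ H} = Fintype.card K ^ 3 := by
  have hsplit := card_subtype_and_add_card_subtype_and_not
    (p := fun x : Submodule K V => finrank K x = 1) (r := (· ≤ H))
  rw [card_finrank_eq_one_le hH, card_finrank_eq_one, hV] at hsplit
  simp only [Finset.sum_range_succ, Finset.sum_range_zero, pow_zero, pow_one] at hsplit
  omega

lemma card_finrank_eq_one_le_not_le (hH : finrank K H + 1 = finrank K V)
    (hl : finrank K l = 2) (hlH : ¬ l ≤ H) :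
    Nat.card {x : Submodule K V // (finrank K x = 1 ∧ x ≤ l) ∧ ¬ x ≤ H} = Fintype.card K := by
  have hP := finrank_inf_add_one_of_not_le hH hlH
  have := card_subtype_and_not_add_one (p := fun x : Submodule K V => finrank K x = 1 ∧ x ≤ l)
    (r := (· ≤ H)) (a := l ⊓ H) fun x => ⟨fun ⟨⟨hx, hxl⟩, hxH⟩ =>
      Submodule.eq_of_le_of_finrank_eq (le_inf hxl hxH) (by omega), fun h => h ▸ ⟨⟨by omega,
        inf_le_left⟩, inf_le_right⟩⟩
  rw [card_finrank_eq_one_le hl] at this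
  simp only [Finset.sum_range_succ, Finset.sum_range_zero, pow_zero, pow_one] at this
  omega

lemma card_finrank_eq_three_ge_ne (hV : finrank K V = 4) (hH : finrank K H = 3)
    (ht : finrank K t = 2) (htH : t ≤ H) :
    Nat.card {σ : Submodule K V // (finrank K σ = 3 ∧ t ≤ σ) ∧ σ ≠ H} = Fintype.card K := by
  have := card_subtype_and_not_add_one (p := fun σ : Submodule K V => finrank K σ = 3 ∧ t ≤ σ)
    (r := (· = H)) (a := H) fun σ => ⟨And.right, fun h => ⟨⟨h ▸ hH, h ▸ htH⟩, h⟩⟩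
  rw [card_finrank_eq_ge (by rw [ht]) (n := 2) (by rw [ht, hV])] at this
  simp only [Finset.sum_range_succ, Finset.sum_range_zero, pow_zero, pow_one] at this
  exact Nat.add_right_cancel (this.trans (add_comm _ _))

lemma card_finrank_eq_two_ge_not_le (hV : finrank K V = 4) (hH : finrank K H = 3)
    (hP : finrank K P = 1) (hPH : P ≤ H) :
    Nat.card {l : Submodule K V // (finrank K l = 2 ∧ P ≤ l) ∧ ¬ l ≤ H} =
      Fintype.card K ^ 2 := by
  have hsplit := card_subtype_and_add_card_subtype_and_not
    (p := fun l : Submodule K V => finrank K l = 2 ∧ P ≤ l) (r := (· ≤ H))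
  rw [(Nat.card_congr (Equiv.subtypeEquivRight fun l => and_assoc)).trans
      (card_finrank_eq_of_le_of_le hPH (by rw [hP]) (n := 2) (by rw [hP, hH])),
    card_finrank_eq_ge (by rw [hP]) (n := 3) (by rw [hP, hV])] at hsplit
  simp only [Finset.sum_range_succ, Finset.sum_range_zero, pow_zero, pow_one] at hsplit
  omega

lemma card_finrank_eq_two_ge_le_not_le (hH : finrank K H + 1 = finrank K V)
    (hσ : finrank K σ = 3) (hσH : ¬ σ ≤ H) (hP : finrank K P = 1) (hPσ : P ≤ σ) (hPH : P ≤ H) :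
    Nat.card {l : Submodule K V // (finrank K l = 2 ∧ P ≤ l ∧ l ≤ σ) ∧ ¬ l ≤ H} =
      Fintype.card K := by
  have hσH2 := finrank_inf_add_one_of_not_le hH hσH
  have := card_subtype_and_not_add_one
    (p := fun l : Submodule K V => finrank K l = 2 ∧ P ≤ l ∧ l ≤ σ) (r := (· ≤ H)) (a := σ ⊓ H)
    fun l => ⟨fun ⟨⟨hl, _, hlσ⟩, hlH⟩ =>
      Submodule.eq_of_le_of_finrank_eq (le_inf hlσ hlH) (by omega),
      fun h => h ▸ ⟨⟨by omega, le_inf hPσ hPH, inf_le_left⟩, inf_le_right⟩⟩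
  rw [card_finrank_eq_of_le_of_le hPσ (by rw [hP]) (n := 2) (by rw [hP, hσ])] at this
  simp only [Finset.sum_range_succ, Finset.sum_range_zero, pow_zero, pow_one] at this
  omega

end ProjectiveSpace

section T2

variable {O : Set (Submodule F (Fin 4 → F))} {H l t σ P Q W : Submodule F (Fin 4 → F)}

namespace T2Inc

lemma le_of_finrank_lt (h : T2Inc W l) (hlt : finrank F W < finrank F l) : W ≤ l :=
  h.resolve_right fun hle => (Submodule.finrank_mono hle).not_gt hlt

lemma ge_of_finrank_lt (h : T2Inc W l) (hlt : finrank F l < finrank F W) : l ≤ W :=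
  h.resolve_left fun hle => (Submodule.finrank_mono hle).not_gt hlt

lemma eq_of_finrank_eq (h : T2Inc W l) (heq : finrank F W = finrank F l) : W = l :=
  h.elim (Submodule.eq_of_le_of_finrank_eq · heq)
    fun hle => (Submodule.eq_of_le_of_finrank_eq hle heq.symm).symm

end T2Inc

lemma IsTangentLine.eq_of_le (ht : IsTangentLine O H t) (hP : P ∈ O) (hQ : Q ∈ O) (hPt : P ≤ t)
    (hQt : Q ≤ t) : P = Q :=
  ht.2.2.unique ⟨hP, hPt⟩ ⟨hQ, hQt⟩

-- Points of types (i) and (ii) and lines of type (a) of `T2Point` and `T2Line`.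
abbrev IsAffinePoint (H x : Submodule F (Fin 4 → F)) : Prop :=
  finrank F x = 1 ∧ ¬ x ≤ H

abbrev IsTangentPlane (O : Set (Submodule F (Fin 4 → F))) (H σ : Submodule F (Fin 4 → F)) :
    Prop :=
  finrank F σ = 3 ∧ σ ≠ H ∧ IsTangentLine O H (σ ⊓ H)

abbrev IsAffineLine (O : Set (Submodule F (Fin 4 → F))) (H l : Submodule F (Fin 4 → F)) :
    Prop :=
  finrank F l = 2 ∧ ¬ l ≤ H ∧ l ⊓ H ∈ O

def T2Collinear (O : Set (Submodule F (Fin 4 → F))) (H W W' : Submodule F (Fin 4 → F)) :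
    Prop :=
  ∃ m, T2Line O H m ∧ T2Inc W m ∧ T2Inc W' m

lemma T2Collinear.symm {W' : Submodule F (Fin 4 → F)} (h : T2Collinear O H W W') :
    T2Collinear O H W' W :=
  let ⟨m, hm, hWm, hW'm⟩ := h
  ⟨m, hm, hW'm, hWm⟩

lemma t2Collinear_self_of_isTangentPlane (hσ : IsTangentPlane O H σ) : T2Collinear O H σ H := by
  obtain ⟨Q, ⟨hQ, hQσ⟩, -⟩ := hσ.2.2.2.2
  exact ⟨Q, Or.inr hQ, Or.inr (hQσ.trans inf_le_left), Or.inr (hQσ.trans inf_le_right)⟩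

lemma IsTangentPlane.not_le (hσ : IsTangentPlane O H σ) : ¬ σ ≤ H := fun h => by
  have := hσ.2.2.1
  rw [inf_eq_left.2 h, hσ.1] at this
  omega

lemma isTangentPlane_of_le (hH : finrank F H = 3) (ht : IsTangentLine O H t)
    (hσ : finrank F σ = 3) (htσ : t ≤ σ) (hσH : ¬ σ ≤ H) :
    IsTangentPlane O H σ ∧ σ ⊓ H = t := by
  have htrace : σ ⊓ H = t :=
    inf_eq_of_le_of_le (by rw [hH, finrank_fin_fun]) hσH htσ ht.2.1 (by rw [ht.1, hσ])
  exact ⟨⟨hσ, fun h => hσH h.le, htrace ▸ ht⟩, htrace⟩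

lemma IsAffineLine.isTangentPlane_sup (hH : finrank F H = 3) (hl : IsAffineLine O H l)
    (ht : IsTangentLine O H t) (hPt : l ⊓ H ≤ t) :
    IsTangentPlane O H (l ⊔ t) ∧ (l ⊔ t) ⊓ H = t := by
  have hinf : l ⊓ t = l ⊓ H := le_antisymm (inf_le_inf_left l ht.2.1) (le_inf inf_le_left hPt)
  have := finrank_inf_add_one_of_not_le (by rw [hH, finrank_fin_fun]) hl.2.1
  have := Submodule.finrank_sup_add_finrank_inf_eq l t
  rw [hinf, ht.1, hl.1] at this
  exact isTangentPlane_of_le hH ht (by omega) le_sup_right fun h => hl.2.1 (le_sup_left.trans h)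

end T2

section Oval

variable [Fintype F] {O : Set (Submodule F (Fin 4 → F))}
  {H l m t x y σ σ' P Q R W : Submodule F (Fin 4 → F)}

structure IsOval (O : Set (Submodule F (Fin 4 → F))) (H : Submodule F (Fin 4 → F)) : Prop where
  finrank_plane : finrank F H = 3
  finrank_eq_one : ∀ P ∈ O, finrank F P = 1
  le_plane : ∀ P ∈ O, P ≤ H
  card_eq : Nat.card O = Fintype.card F + 1
  not_le_sup : ∀ P₁ ∈ O, ∀ P₂ ∈ O, ∀ P₃ ∈ O, P₁ ≠ P₂ → P₁ ≠ P₃ → P₂ ≠ P₃ → ¬ P₃ ≤ P₁ ⊔ P₂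

namespace IsOval

lemma finrank_add_one (hO : IsOval O H) : finrank F H + 1 = finrank F (Fin 4 → F) := by
  rw [hO.finrank_plane, finrank_fin_fun]

lemma eq_or_eq_of_le (hO : IsOval O H) (hm : finrank F m = 2) (hP : P ∈ O) (hQ : Q ∈ O)
    (hR : R ∈ O) (hPQ : P ≠ Q) (hPm : P ≤ m) (hQm : Q ≤ m) (hRm : R ≤ m) : R = P ∨ R = Q := by
  by_contra! h
  rw [eq_sup_of_finrank_eq_two (hO.finrank_eq_one P hP) (hO.finrank_eq_one Q hQ) hPQ hm hPm hQm]
    at hRm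
  exact hO.not_le_sup P hP Q hQ R hR hPQ (Ne.symm h.1) (Ne.symm h.2) hRm

lemma card_sdiff_singleton (hO : IsOval O H) (hP : P ∈ O) :
    Nat.card {Q // Q ∈ O ∧ Q ≠ P} = Fintype.card F := by
  have hsplit := card_subtype_and_add_card_subtype_and_not (p := (· ∈ O)) (r := (· = P))
  rw [card_subtype_of_iff_eq (a := P) fun Q => ⟨And.right, fun h => ⟨h ▸ hP, h⟩⟩] at hsplit
  have : Nat.card {Q // Q ∈ O} = Fintype.card F + 1 := hO.card_eq
  change Nat.card {Q // Q ∈ O ∧ ¬ Q = P} = _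
  omega

lemma existsUnique_tangent (hO : IsOval O H) (hP : P ∈ O) :
    ∃! t, IsTangentLine O H t ∧ P ≤ t := by
  have hP1 := hO.finrank_eq_one P hP
  let L : Submodule F (Fin 4 → F) → Prop := fun m => finrank F m = 2 ∧ P ≤ m ∧ m ≤ H
  let secant : Submodule F (Fin 4 → F) → Prop := fun m => ∃ Q ∈ O, Q ≠ P ∧ Q ≤ m
  have hL : Nat.card {m // L m} = Fintype.card F + 1 := by
    simpa [Finset.sum_range_succ, add_comm] using card_finrank_eq_of_le_of_le
      (hO.le_plane P hP) (by rw [hP1]) (n := 2) (by rw [hP1, hO.finrank_plane])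
  have hjoin : ∀ Q : {Q // Q ∈ O ∧ Q ≠ P}, L (P ⊔ Q.1) ∧ secant (P ⊔ Q.1) := by
    rintro ⟨Q, hQ, hQP⟩
    have hQ1 := hO.finrank_eq_one Q hQ
    exact ⟨⟨finrank_sup_eq_two_of_ne hP1 hQ1 (Ne.symm hQP), le_sup_left,
      sup_le (hO.le_plane P hP) (hO.le_plane Q hQ)⟩, Q, hQ, hQP, le_sup_right⟩
  have hsecant : Nat.card {m // L m ∧ secant m} = Fintype.card F := by
    rw [← hO.card_sdiff_singleton hP]
    refine (Nat.card_congr (Equiv.ofBijective (fun Q => ⟨P ⊔ Q.1, hjoin Q⟩) ⟨?_, ?_⟩)).symm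
    · rintro ⟨Q, hQ, hQP⟩ ⟨Q', hQ', hQ'P⟩ h
      have hsup : P ⊔ Q = P ⊔ Q' := congrArg Subtype.val h
      by_contra hne
      exact hO.not_le_sup P hP Q hQ Q' hQ' (Ne.symm hQP) (Ne.symm hQ'P)
        (Subtype.coe_ne_coe.2 hne) (hsup ▸ le_sup_right)
    · rintro ⟨m, ⟨hm, hPm, -⟩, Q, hQ, hQP, hQm⟩
      exact ⟨⟨Q, hQ, hQP⟩, Subtype.ext (eq_sup_of_finrank_eq_two hP1 (hO.finrank_eq_one Q hQ)
        (Ne.symm hQP) hm hPm hQm).symm⟩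
  have htangent : Nat.card {m // L m ∧ ¬ secant m} = 1 := by
    have := card_subtype_and_add_card_subtype_and_not (p := L) (r := secant)
    omega
  have key : ∀ m, (L m ∧ ¬ secant m) ↔ (IsTangentLine O H m ∧ P ≤ m) := by
    refine fun m => ⟨fun ⟨⟨hm, hPm, hmH⟩, hns⟩ => ⟨⟨hm, hmH, P, ⟨hP, hPm⟩, fun Q hQ => ?_⟩, hPm⟩,
      fun ⟨ht, hPm⟩ => ⟨⟨ht.1, hPm, ht.2.1⟩, fun ⟨Q, hQ, hQP, hQm⟩ => ?_⟩⟩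
    · by_contra hQP
      exact hns ⟨Q, hQ.1, hQP, hQ.2⟩
    · exact hQP (ht.eq_of_le hQ hP hQm hPm)
  exact existsUnique_of_card_subtype_eq_one
    ((Nat.card_congr (Equiv.subtypeEquivRight key)).symm.trans htangent)

lemma card_tangentLines (hO : IsOval O H) :
    Nat.card {t // IsTangentLine O H t} = Fintype.card F + 1 := by
  rw [← hO.card_eq]
  refine Nat.card_congr (Equiv.ofBijective
    (fun t => ⟨_, t.2.2.2.exists.choose_spec.1⟩) ⟨?_, ?_⟩)
  · rintro ⟨t, ht⟩ ⟨t', ht'⟩ h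
    have hP := ht.2.2.exists.choose_spec
    have hP' := ht'.2.2.exists.choose_spec
    have heq : ht.2.2.exists.choose = ht'.2.2.exists.choose := congrArg Subtype.val h
    exact Subtype.ext ((hO.existsUnique_tangent hP.1).unique ⟨ht, hP.2⟩ ⟨ht', heq ▸ hP'.2⟩)
  · rintro ⟨P, hP⟩
    obtain ⟨t, ⟨ht, hPt⟩, -⟩ := hO.existsUnique_tangent hP
    exact ⟨⟨t, ht⟩, Subtype.ext (ht.eq_of_le ht.2.2.exists.choose_spec.1 hP
      ht.2.2.exists.choose_spec.2 hPt)⟩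

lemma inf_eq_of_le (hO : IsOval O H) (hl : finrank F l = 2) (hlH : ¬ l ≤ H) (hQ : Q ∈ O)
    (hQl : Q ≤ l) : l ⊓ H = Q :=
  inf_eq_of_le_of_le hO.finrank_add_one hlH hQl (hO.le_plane Q hQ)
    (by rw [hO.finrank_eq_one Q hQ, hl])

lemma isAffineLine_sup (hO : IsOval O H) (hx : IsAffinePoint H x) (hQ : Q ∈ O) :
    IsAffineLine O H (x ⊔ Q) ∧ (x ⊔ Q) ⊓ H = Q := by
  have h2 : finrank F ↥(x ⊔ Q) = 2 := by
    rw [finrank_sup_of_finrank_eq_one hx.1 fun h => hx.2 (h.trans (hO.le_plane Q hQ)),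
      hO.finrank_eq_one Q hQ]
  have hH : ¬ x ⊔ Q ≤ H := fun h => hx.2 (le_sup_left.trans h)
  have htrace := hO.inf_eq_of_le h2 hH hQ le_sup_right
  exact ⟨⟨h2, hH, by rw [htrace]; exact hQ⟩, htrace⟩

lemma t2Point_inc_iff_of_isAffineLine (hO : IsOval O H) (hl : IsAffineLine O H l)
    (ht : IsTangentLine O H t) (hPt : l ⊓ H ≤ t) (W : Submodule F (Fin 4 → F)) :
    T2Point O H W ∧ T2Inc W l ↔ (IsAffinePoint H W ∧ W ≤ l) ∨ W = l ⊔ t := by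
  obtain ⟨hplane, htrace⟩ := hl.isTangentPlane_sup hO.finrank_plane ht hPt
  constructor
  · rintro ⟨hW | hW | rfl, hWl⟩
    · exact Or.inl ⟨hW, hWl.le_of_finrank_lt (by rw [hW.1, hl.1]; norm_num)⟩
    · have hlW := hWl.ge_of_finrank_lt (by rw [hW.1, hl.1]; norm_num)
      have hWt : W ⊓ H = t := (hO.existsUnique_tangent hl.2.2).unique
        ⟨hW.2.2, inf_le_inf_right H hlW⟩ ⟨ht, hPt⟩
      exact Or.inr (Submodule.eq_of_le_of_finrank_eq (sup_le hlW (hWt ▸ inf_le_left))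
        (hplane.1.trans hW.1.symm)).symm
    · exact absurd (hWl.ge_of_finrank_lt (by rw [hl.1, hO.finrank_plane]; norm_num)) hl.2.1
  · rintro (⟨hW, hWl⟩ | rfl)
    · exact ⟨Or.inl hW, Or.inl hWl⟩
    · exact ⟨Or.inr (Or.inl hplane), Or.inr le_sup_left⟩

lemma t2Point_inc_iff_of_mem (hO : IsOval O H) (hP : P ∈ O) (ht : IsTangentLine O H t)
    (hPt : P ≤ t) (W : Submodule F (Fin 4 → F)) :
    T2Point O H W ∧ T2Inc W P ↔ (finrank F W = 3 ∧ t ≤ W ∧ W ≠ H) ∨ W = H := by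
  have hP1 := hO.finrank_eq_one P hP
  constructor
  · rintro ⟨hW | hW | rfl, hWP⟩
    · exact absurd (hWP.eq_of_finrank_eq (hW.1.trans hP1.symm) ▸ hO.le_plane P hP) hW.2
    · have hPW := hWP.ge_of_finrank_lt (by rw [hW.1, hP1]; norm_num)
      have hWt : W ⊓ H = t := (hO.existsUnique_tangent hP).unique
        ⟨hW.2.2, le_inf hPW (hO.le_plane P hP)⟩ ⟨ht, hPt⟩
      exact Or.inl ⟨hW.1, hWt ▸ inf_le_left, hW.2.1⟩
    · exact Or.inr rfl
  · rintro (⟨hW, htW, hWH⟩ | rfl)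
    · have hWH' := not_le_of_finrank_eq_of_ne (hW.trans hO.finrank_plane.symm) hWH
      exact ⟨Or.inr (Or.inl (isTangentPlane_of_le hO.finrank_plane ht hW htW hWH').1),
        Or.inr (hPt.trans htW)⟩
    · exact ⟨Or.inr (Or.inr rfl), Or.inr (hO.le_plane P hP)⟩

lemma t2Line_inc_iff_of_isAffinePoint (hO : IsOval O H) (hx : IsAffinePoint H x)
    (m : Submodule F (Fin 4 → F)) : T2Line O H m ∧ T2Inc x m ↔ IsAffineLine O H m ∧ x ≤ m := by
  constructor
  · rintro ⟨hm | hm, hxm⟩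
    · exact ⟨hm, hxm.le_of_finrank_lt (by rw [hx.1, hm.1]; norm_num)⟩
    · exact absurd (hxm.eq_of_finrank_eq (hx.1.trans (hO.finrank_eq_one m hm).symm) ▸
        hO.le_plane m hm) hx.2
  · exact fun ⟨hm, hxm⟩ => ⟨Or.inl hm, Or.inl hxm⟩

lemma t2Line_inc_iff_of_isTangentPlane (hO : IsOval O H) (hσ : IsTangentPlane O H σ)
    (hQ : Q ∈ O) (hQσ : Q ≤ σ) (m : Submodule F (Fin 4 → F)) :
    T2Line O H m ∧ T2Inc σ m ↔ (finrank F m = 2 ∧ Q ≤ m ∧ m ≤ σ ∧ ¬ m ≤ H) ∨ m = Q := by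
  have hQσH : Q ≤ σ ⊓ H := le_inf hQσ (hO.le_plane Q hQ)
  constructor
  · rintro ⟨hm | hm, hσm⟩
    · have hmσ := hσm.ge_of_finrank_lt (by rw [hσ.1, hm.1]; norm_num)
      have hR : m ⊓ H = Q :=
        hσ.2.2.eq_of_le hm.2.2 hQ (inf_le_inf_right H hmσ) hQσH
      exact Or.inl ⟨hm.1, hR ▸ inf_le_left, hmσ, hm.2.1⟩
    · have hmσ := hσm.ge_of_finrank_lt (by rw [hσ.1, hO.finrank_eq_one m hm]; norm_num)
      exact Or.inr (hσ.2.2.eq_of_le hm hQ (le_inf hmσ (hO.le_plane m hm)) hQσH)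
  · rintro (⟨hm, hQm, hmσ, hmH⟩ | rfl)
    · exact ⟨Or.inl ⟨hm, hmH, by rw [hO.inf_eq_of_le hm hmH hQ hQm]; exact hQ⟩, Or.inr hmσ⟩
    · exact ⟨Or.inr hQ, Or.inr hQσ⟩

lemma t2Line_inc_self_iff (hO : IsOval O H) (m : Submodule F (Fin 4 → F)) :
    T2Line O H m ∧ T2Inc H m ↔ m ∈ O := by
  constructor
  · rintro ⟨hm | hm, hHm⟩
    · exact absurd (hHm.ge_of_finrank_lt (by rw [hO.finrank_plane, hm.1]; norm_num)) hm.2.1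
    · exact hm
  · exact fun hm => ⟨Or.inr hm, Or.inr (hO.le_plane m hm)⟩

lemma t2Collinear_isAffinePoint_iff (hO : IsOval O H) (hx : IsAffinePoint H x)
    (hy : finrank F y = 1) (hxy : x ≠ y) : T2Collinear O H x y ↔ ∃ Q ∈ O, Q ≤ x ⊔ y := by
  constructor
  · rintro ⟨m, hm, hxm, hym⟩
    obtain ⟨hm, hxm⟩ := (hO.t2Line_inc_iff_of_isAffinePoint hx m).1 ⟨hm, hxm⟩
    have hym := hym.le_of_finrank_lt (by rw [hy, hm.1]; norm_num)
    exact ⟨m ⊓ H, hm.2.2, eq_sup_of_finrank_eq_two hx.1 hy hxy hm.1 hxm hym ▸ inf_le_left⟩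
  · rintro ⟨Q, hQ, hQxy⟩
    obtain ⟨hline, -⟩ := hO.isAffineLine_sup hx hQ
    have hxQ : x ≠ Q := fun h => hx.2 (h ▸ hO.le_plane Q hQ)
    have hsup : x ⊔ y = x ⊔ Q := eq_sup_of_finrank_eq_two hx.1 (hO.finrank_eq_one Q hQ) hxQ
      (finrank_sup_eq_two_of_ne hx.1 hy hxy) le_sup_left hQxy
    exact ⟨x ⊔ Q, Or.inl hline, Or.inl le_sup_left, Or.inl (hsup ▸ le_sup_right)⟩

lemma t2Collinear_isTangentPlane_iff (hO : IsOval O H) (hx : IsAffinePoint H x)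
    (hσ : IsTangentPlane O H σ) : T2Collinear O H x σ ↔ x ≤ σ := by
  constructor
  · rintro ⟨m, hm, hxm, hσm⟩
    obtain ⟨hm, hxm⟩ := (hO.t2Line_inc_iff_of_isAffinePoint hx m).1 ⟨hm, hxm⟩
    exact hxm.trans (hσm.ge_of_finrank_lt (by rw [hσ.1, hm.1]; norm_num))
  · intro hxσ
    obtain ⟨Q, ⟨hQ, hQσ⟩, -⟩ := hσ.2.2.2.2
    exact ⟨x ⊔ Q, Or.inl (hO.isAffineLine_sup hx hQ).1, Or.inl le_sup_left,
      Or.inr (sup_le hxσ (hQσ.trans inf_le_left))⟩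

lemma not_t2Collinear_self (hO : IsOval O H) (hx : IsAffinePoint H x) :
    ¬ T2Collinear O H x H := fun ⟨m, hm, hxm, hHm⟩ => by
  have hmO := (hO.t2Line_inc_self_iff m).1 ⟨hm, hHm⟩
  exact hx.2 (hxm.eq_of_finrank_eq (hx.1.trans (hO.finrank_eq_one m hmO).symm) ▸
    hO.le_plane m hmO)

lemma t2Collinear_isTangentPlane_isTangentPlane_iff (hO : IsOval O H)
    (hσ : IsTangentPlane O H σ) (hσ' : IsTangentPlane O H σ') :
    T2Collinear O H σ σ' ↔ σ ⊓ H = σ' ⊓ H := by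
  constructor
  · rintro ⟨m, hm, hσm, hσ'm⟩
    obtain ⟨R, hR, hRσ, hRσ'⟩ : ∃ R ∈ O, R ≤ σ ∧ R ≤ σ' := by
      rcases hm with hm | hm
      · exact ⟨m ⊓ H, hm.2.2,
          inf_le_left.trans (hσm.ge_of_finrank_lt (by rw [hσ.1, hm.1]; norm_num)),
          inf_le_left.trans (hσ'm.ge_of_finrank_lt (by rw [hσ'.1, hm.1]; norm_num))⟩
      · have hm1 := hO.finrank_eq_one m hm
        exact ⟨m, hm, hσm.ge_of_finrank_lt (by rw [hσ.1, hm1]; norm_num),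
          hσ'm.ge_of_finrank_lt (by rw [hσ'.1, hm1]; norm_num)⟩
    exact (hO.existsUnique_tangent hR).unique ⟨hσ.2.2, le_inf hRσ (hO.le_plane R hR)⟩
      ⟨hσ'.2.2, le_inf hRσ' (hO.le_plane R hR)⟩
  · intro h
    obtain ⟨Q, ⟨hQ, hQσ⟩, -⟩ := hσ.2.2.2.2
    exact ⟨Q, Or.inr hQ, Or.inr (hQσ.trans inf_le_left),
      Or.inr ((h ▸ hQσ).trans inf_le_left)⟩

lemma le_of_inf_le_sup (hO : IsOval O H) (hl : IsAffineLine O H l) (hx : finrank F x = 1)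
    (hy : IsAffinePoint H y) (hyl : y ≤ l) (h : l ⊓ H ≤ x ⊔ y) : x ≤ l := by
  have hlsup : l = l ⊓ H ⊔ y := eq_sup_of_finrank_eq_two (hO.finrank_eq_one _ hl.2.2) hy.1
    (fun h => hy.2 (h ▸ inf_le_right)) hl.1 inf_le_left hyl
  exact le_of_le_sup hl.1 hx hy.1 (hlsup ▸ sup_le h le_sup_right)

lemma finrank_sup_inf_eq_two (hO : IsOval O H) (hl : IsAffineLine O H l)
    (hx : IsAffinePoint H x) (hxl : ¬ x ≤ l) : finrank F ↥((x ⊔ l) ⊓ H) = 2 := by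
  have := finrank_inf_add_one_of_not_le (U := x ⊔ l) hO.finrank_add_one
    fun h => hx.2 (le_sup_left.trans h)
  rw [finrank_sup_of_finrank_eq_one hx.1 hxl, hl.1] at this
  omega

lemma exists_mem_ne_le_sup (hO : IsOval O H) (hl : IsAffineLine O H l)
    (ht : IsTangentLine O H t) (hPt : l ⊓ H ≤ t) (hx : IsAffinePoint H x) (hxl : ¬ x ≤ l)
    (hxt : ¬ x ≤ l ⊔ t) : ∃ Q ∈ O, Q ≠ l ⊓ H ∧ Q ≤ x ⊔ l := by
  have hn := hO.finrank_sup_inf_eq_two hl hx hxl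
  have hPn : l ⊓ H ≤ (x ⊔ l) ⊓ H := inf_le_inf_right H le_sup_right
  by_contra! h
  have hnt : (x ⊔ l) ⊓ H = t := (hO.existsUnique_tangent hl.2.2).unique
    ⟨⟨hn, inf_le_right, l ⊓ H, ⟨hl.2.2, hPn⟩, fun R ⟨hR, hRn⟩ => by
      by_contra hRP
      exact h R hR hRP (hRn.trans inf_le_left)⟩, hPn⟩ ⟨ht, hPt⟩
  have hlt := (hl.isTangentPlane_sup hO.finrank_plane ht hPt).1.1
  have hsup : l ⊔ t = x ⊔ l := Submodule.eq_of_le_of_finrank_eq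
    (sup_le le_sup_right (hnt ▸ inf_le_left))
    (by rw [hlt, finrank_sup_of_finrank_eq_one hx.1 hxl, hl.1])
  exact hxt (hsup ▸ le_sup_left)

lemma isAffinePoint_sup_inf (hO : IsOval O H) (hl : IsAffineLine O H l)
    (hx : IsAffinePoint H x) (hxl : ¬ x ≤ l) (hQ : Q ∈ O) (hQP : Q ≠ l ⊓ H) (hQxl : Q ≤ x ⊔ l) :
    IsAffinePoint H ((x ⊔ Q) ⊓ l) := by
  obtain ⟨hxQ, hxQH⟩ := hO.isAffineLine_sup hx hQ
  have hw1 : finrank F ↥((x ⊔ Q) ⊓ l) = 1 := by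
    have hsup : x ⊔ Q ⊔ l = x ⊔ l := le_antisymm (sup_le (sup_le le_sup_left hQxl) le_sup_right)
      (sup_le_sup_right le_sup_left l)
    have := Submodule.finrank_sup_add_finrank_inf_eq (x ⊔ Q) l
    rw [hsup, finrank_sup_of_finrank_eq_one hx.1 hxl, hxQ.1, hl.1] at this
    omega
  refine ⟨hw1, fun h => hQP ?_⟩
  have hwQ : (x ⊔ Q) ⊓ l ≤ Q := (le_inf inf_le_left h).trans hxQH.le
  have hwP : (x ⊔ Q) ⊓ l ≤ l ⊓ H := le_inf inf_le_right h
  exact (Submodule.eq_of_le_of_finrank_eq hwQ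
    (hw1.trans (hO.finrank_eq_one Q hQ).symm)).symm.trans
    (Submodule.eq_of_le_of_finrank_eq hwP (hw1.trans (hO.finrank_eq_one _ hl.2.2).symm))

lemma existsUnique_t2Collinear_of_isAffinePoint_of_isAffineLine (hO : IsOval O H)
    (hl : IsAffineLine O H l) (hx : IsAffinePoint H x) (hxl : ¬ x ≤ l) :
    ∃! W, (T2Point O H W ∧ T2Inc W l) ∧ T2Collinear O H x W := by
  obtain ⟨t, ⟨ht, hPt⟩, -⟩ := hO.existsUnique_tangent hl.2.2
  obtain ⟨hplane, htrace⟩ := hl.isTangentPlane_sup hO.finrank_plane ht hPt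
  simp only [hO.t2Point_inc_iff_of_isAffineLine hl ht hPt]
  have hcol : ∀ y, IsAffinePoint H y → y ≤ l → (T2Collinear O H x y ↔ ∃ Q ∈ O, Q ≤ x ⊔ y) :=
    fun y hy hyl => hO.t2Collinear_isAffinePoint_iff hx hy.1 fun h => hxl (h ▸ hyl)
  have hP : ∀ y, IsAffinePoint H y → y ≤ l → ¬ l ⊓ H ≤ x ⊔ y := fun y hy hyl h =>
    hxl (hO.le_of_inf_le_sup hl hx.1 hy hyl h)
  by_cases hxt : x ≤ l ⊔ t
  · refine ⟨l ⊔ t, ⟨Or.inr rfl, (hO.t2Collinear_isTangentPlane_iff hx hplane).2 hxt⟩, ?_⟩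
    rintro W ⟨⟨hW, hWl⟩ | rfl, hxW⟩
    · obtain ⟨Q, hQ, hQxW⟩ := (hcol W hW hWl).1 hxW
      have hQt : Q ≤ t := htrace ▸
        le_inf (hQxW.trans (sup_le hxt (hWl.trans le_sup_left))) (hO.le_plane Q hQ)
      exact absurd (ht.eq_of_le hQ hl.2.2 hQt hPt ▸ hQxW) (hP W hW hWl)
    · rfl
  obtain ⟨Q, hQ, hQP, hQxl⟩ := hO.exists_mem_ne_le_sup hl ht hPt hx hxl hxt
  have hw := hO.isAffinePoint_sup_inf hl hx hxl hQ hQP hQxl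
  have hxy : ∀ y : Submodule F (Fin 4 → F), finrank F y = 1 → y ≤ l → finrank F ↥(x ⊔ y) = 2 :=
    fun y hy hyl => finrank_sup_eq_two_of_ne hx.1 hy fun h => hxl (h ▸ hyl)
  have hxQ := (hO.isAffineLine_sup hx hQ).1.1
  refine ⟨(x ⊔ Q) ⊓ l, ⟨Or.inl ⟨hw, inf_le_right⟩, (hcol _ hw inf_le_right).2 ⟨Q, hQ, ?_⟩⟩, ?_⟩
  · exact le_sup_right.trans (Submodule.eq_of_le_of_finrank_eq (sup_le le_sup_left inf_le_left)
      ((hxy _ hw.1 inf_le_right).trans hxQ.symm)).ge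
  rintro W ⟨⟨hW, hWl⟩ | rfl, hxW⟩
  · obtain ⟨R, hR, hRxW⟩ := (hcol W hW hWl).1 hxW
    have hRQ : R = Q := (hO.eq_or_eq_of_le (hO.finrank_sup_inf_eq_two hl hx hxl) hl.2.2 hQ hR
      (Ne.symm hQP) (inf_le_inf_right H le_sup_right) (le_inf hQxl (hO.le_plane Q hQ))
      (le_inf (hRxW.trans (sup_le_sup_left hWl x)) (hO.le_plane R hR))).resolve_left
      fun h => hP W hW hWl (h ▸ hRxW)
    have hsup := Submodule.eq_of_le_of_finrank_eq (sup_le le_sup_left (hRQ ▸ hRxW))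
      (hxQ.trans (hxy W hW.1 hWl).symm)
    exact Submodule.eq_of_le_of_finrank_eq (le_inf (le_sup_right.trans hsup.ge) hWl)
      (hW.1.trans hw.1.symm)
  · exact absurd ((hO.t2Collinear_isTangentPlane_iff hx hplane).1 hxW) hxt

lemma existsUnique_t2Collinear_of_isTangentPlane_of_isAffineLine (hO : IsOval O H)
    (hl : IsAffineLine O H l) (hσ : IsTangentPlane O H σ) (hlσ : ¬ l ≤ σ) :
    ∃! W, (T2Point O H W ∧ T2Inc W l) ∧ T2Collinear O H σ W := by
  obtain ⟨t, ⟨ht, hPt⟩, -⟩ := hO.existsUnique_tangent hl.2.2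
  obtain ⟨hplane, htrace⟩ := hl.isTangentPlane_sup hO.finrank_plane ht hPt
  simp only [hO.t2Point_inc_iff_of_isAffineLine hl ht hPt]
  have hcol : ∀ y, IsAffinePoint H y → (T2Collinear O H σ y ↔ y ≤ σ) := fun y hy =>
    ⟨fun h => (hO.t2Collinear_isTangentPlane_iff hy hσ).1 h.symm,
      fun h => ((hO.t2Collinear_isTangentPlane_iff hy hσ).2 h).symm⟩
  have hlσ1 : finrank F ↥(l ⊓ σ) = 1 := by
    have := finrank_inf_add_one_of_not_le (by rw [hσ.1, finrank_fin_fun]) hlσ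
    rw [hl.1] at this
    omega
  have hP1 := hO.finrank_eq_one _ hl.2.2
  by_cases hPσ : l ⊓ H ≤ σ
  · have hσt : σ ⊓ H = t := (hO.existsUnique_tangent hl.2.2).unique
      ⟨hσ.2.2, le_inf hPσ inf_le_right⟩ ⟨ht, hPt⟩
    refine ⟨l ⊔ t, ⟨Or.inr rfl, (hO.t2Collinear_isTangentPlane_isTangentPlane_iff hσ hplane).2
      (hσt.trans htrace.symm)⟩, ?_⟩
    rintro W ⟨⟨hW, hWl⟩ | rfl, hσW⟩
    · have hW' := Submodule.eq_of_le_of_finrank_eq (le_inf hWl ((hcol W hW).1 hσW))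
        (hW.1.trans hlσ1.symm)
      have hP' := Submodule.eq_of_le_of_finrank_eq (le_inf inf_le_left hPσ) (hP1.trans hlσ1.symm)
      exact absurd ((hW'.trans hP'.symm).le.trans inf_le_right) hW.2
    · rfl
  have hw : IsAffinePoint H (l ⊓ σ) := ⟨hlσ1, fun h => hPσ (Submodule.eq_of_le_of_finrank_eq
    (le_inf inf_le_left h) (hlσ1.trans hP1.symm) ▸ inf_le_right)⟩
  refine ⟨l ⊓ σ, ⟨Or.inl ⟨hw, inf_le_left⟩, (hcol _ hw).2 inf_le_right⟩, ?_⟩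
  rintro W ⟨⟨hW, hWl⟩ | rfl, hσW⟩
  · exact Submodule.eq_of_le_of_finrank_eq (le_inf hWl ((hcol W hW).1 hσW))
      (hW.1.trans hlσ1.symm)
  · have hσt := ((hO.t2Collinear_isTangentPlane_isTangentPlane_iff hσ hplane).1 hσW).trans htrace
    exact absurd (hPt.trans (hσt ▸ inf_le_left)) hPσ

lemma existsUnique_t2Collinear_self_of_isAffineLine (hO : IsOval O H)
    (hl : IsAffineLine O H l) : ∃! W, (T2Point O H W ∧ T2Inc W l) ∧ T2Collinear O H H W := by
  obtain ⟨t, ⟨ht, hPt⟩, -⟩ := hO.existsUnique_tangent hl.2.2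
  obtain ⟨hplane, -⟩ := hl.isTangentPlane_sup hO.finrank_plane ht hPt
  simp only [hO.t2Point_inc_iff_of_isAffineLine hl ht hPt]
  refine ⟨l ⊔ t, ⟨Or.inr rfl, (t2Collinear_self_of_isTangentPlane hplane).symm⟩, ?_⟩
  rintro W ⟨⟨hW, -⟩ | rfl, hHW⟩
  · exact absurd hHW.symm (hO.not_t2Collinear_self hW)
  · rfl

lemma existsUnique_t2Collinear_of_isAffinePoint_of_mem (hO : IsOval O H) (hP : P ∈ O)
    (hx : IsAffinePoint H x) : ∃! W, (T2Point O H W ∧ T2Inc W P) ∧ T2Collinear O H x W := by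
  obtain ⟨t, ⟨ht, hPt⟩, -⟩ := hO.existsUnique_tangent hP
  simp only [hO.t2Point_inc_iff_of_mem hP ht hPt]
  have h3 : finrank F ↥(x ⊔ t) = 3 := by
    rw [finrank_sup_of_finrank_eq_one hx.1 fun h => hx.2 (h.trans ht.2.1), ht.1]
  obtain ⟨hplane, -⟩ := isTangentPlane_of_le hO.finrank_plane ht h3 le_sup_right
    fun h => hx.2 (le_sup_left.trans h)
  refine ⟨x ⊔ t, ⟨Or.inl ⟨h3, le_sup_right, hplane.2.1⟩,
    (hO.t2Collinear_isTangentPlane_iff hx hplane).2 le_sup_left⟩, ?_⟩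
  rintro W ⟨⟨hW3, htW, hWH⟩ | rfl, hxW⟩
  · have hWplane := (isTangentPlane_of_le hO.finrank_plane ht hW3 htW
      (not_le_of_finrank_eq_of_ne (hW3.trans hO.finrank_plane.symm) hWH)).1
    exact (Submodule.eq_of_le_of_finrank_eq
      (sup_le ((hO.t2Collinear_isTangentPlane_iff hx hWplane).1 hxW) htW)
      (h3.trans hW3.symm)).symm
  · exact absurd hxW (hO.not_t2Collinear_self hx)

lemma existsUnique_t2Collinear_of_isTangentPlane_of_mem (hO : IsOval O H) (hP : P ∈ O)
    (hσ : IsTangentPlane O H σ) (hPσ : ¬ P ≤ σ) :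
    ∃! W, (T2Point O H W ∧ T2Inc W P) ∧ T2Collinear O H σ W := by
  obtain ⟨t, ⟨ht, hPt⟩, -⟩ := hO.existsUnique_tangent hP
  simp only [hO.t2Point_inc_iff_of_mem hP ht hPt]
  refine ⟨H, ⟨Or.inr rfl, t2Collinear_self_of_isTangentPlane hσ⟩, ?_⟩
  rintro W ⟨⟨hW3, htW, hWH⟩ | rfl, hσW⟩
  · obtain ⟨hWplane, hWt⟩ := isTangentPlane_of_le hO.finrank_plane ht hW3 htW
      (not_le_of_finrank_eq_of_ne (hW3.trans hO.finrank_plane.symm) hWH)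
    have hσt := ((hO.t2Collinear_isTangentPlane_isTangentPlane_iff hσ hWplane).1 hσW).trans hWt
    exact absurd (hPt.trans (hσt ▸ inf_le_left)) hPσ
  · rfl

lemma existsUnique_t2Collinear (hO : IsOval O H) (hW : T2Point O H W) (hl : T2Line O H l)
    (hWl : ¬ T2Inc W l) : ∃! W', (T2Point O H W' ∧ T2Inc W' l) ∧ T2Collinear O H W W' := by
  rcases hl with hl | hP <;> rcases hW with hx | hσ | rfl
  · exact hO.existsUnique_t2Collinear_of_isAffinePoint_of_isAffineLine hl hx (hWl <| .inl ·)
  · exact hO.existsUnique_t2Collinear_of_isTangentPlane_of_isAffineLine hl hσ (hWl <| .inr ·)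
  · exact hO.existsUnique_t2Collinear_self_of_isAffineLine hl
  · exact hO.existsUnique_t2Collinear_of_isAffinePoint_of_mem hP hx
  · exact hO.existsUnique_t2Collinear_of_isTangentPlane_of_mem hP hσ (hWl <| .inr ·)
  · exact absurd (.inr (hO.le_plane l hP)) hWl

lemma card_isTangentPlane (hO : IsOval O H) :
    Nat.card {σ // IsTangentPlane O H σ} = (Fintype.card F + 1) * Fintype.card F := by
  rw [card_eq_mul_of_card_fiber (fun σ => (⟨σ.1 ⊓ H, σ.2.2.2⟩ : {t // IsTangentLine O H t}))
    (c := Fintype.card F) fun t => ?_, hO.card_tangentLines]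
  rw [← card_finrank_eq_three_ge_ne (finrank_fin_fun F) hO.finrank_plane t.2.1 t.2.2.1]
  refine Nat.card_congr ((Equiv.subtypeEquivRight fun σ => Subtype.ext_iff).trans
    ((Equiv.subtypeSubtypeEquivSubtypeInter _ (· ⊓ H = t.1)).trans
    (Equiv.subtypeEquivRight fun σ => ⟨fun ⟨hσ, hσt⟩ => ⟨⟨hσ.1, hσt ▸ inf_le_left⟩, hσ.2.1⟩,
      fun ⟨⟨hσ, htσ⟩, hσH⟩ => isTangentPlane_of_le hO.finrank_plane t.2 hσ htσ
        (not_le_of_finrank_eq_of_ne (hσ.trans hO.finrank_plane.symm) hσH)⟩)))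

lemma card_isAffineLine (hO : IsOval O H) :
    Nat.card {l // IsAffineLine O H l} = (Fintype.card F + 1) * Fintype.card F ^ 2 := by
  rw [card_eq_mul_of_card_fiber (fun l => (⟨l.1 ⊓ H, l.2.2.2⟩ : O))
    (c := Fintype.card F ^ 2) fun P => ?_, hO.card_eq]
  rw [← card_finrank_eq_two_ge_not_le (finrank_fin_fun F) hO.finrank_plane
    (hO.finrank_eq_one P.1 P.2) (hO.le_plane P.1 P.2)]
  refine Nat.card_congr ((Equiv.subtypeEquivRight fun l => Subtype.ext_iff).trans
    ((Equiv.subtypeSubtypeEquivSubtypeInter _ (· ⊓ H = P.1)).trans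
    (Equiv.subtypeEquivRight fun l => ⟨fun ⟨hl, hlP⟩ => ⟨⟨hl.1, hlP ▸ inf_le_left⟩, hl.2.1⟩,
      fun ⟨⟨hl, hPl⟩, hlH⟩ => ?_⟩)))
  have htrace := hO.inf_eq_of_le hl hlH P.2 hPl
  exact ⟨⟨hl, hlH, htrace ▸ P.2⟩, htrace⟩

lemma card_t2Point (hO : IsOval O H) :
    Nat.card {W // T2Point O H W} = (Fintype.card F + 1) * (Fintype.card F ^ 2 + 1) := by
  unfold T2Point
  rw [card_subtype_or_of_disjoint fun W hW hW' => by
      rcases hW' with hW' | rfl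
      · have := hW'.1
        rw [hW.1] at this
        omega
      · exact hW.2 le_rfl,
    card_subtype_or_of_disjoint fun W hW hWH => hW.2.1 hWH,
    card_finrank_eq_one_not_le (finrank_fin_fun F) hO.finrank_plane, hO.card_isTangentPlane,
    card_subtype_of_iff_eq fun _ => Iff.rfl]
  ring

lemma card_t2Line (hO : IsOval O H) :
    Nat.card {l // T2Line O H l} = (Fintype.card F + 1) * (Fintype.card F ^ 2 + 1) := by
  unfold T2Line
  rw [card_subtype_or_of_disjoint fun l hl hlO => by
      have := hO.finrank_eq_one l hlO
      rw [hl.1] at this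
      omega,
    hO.card_isAffineLine, show Nat.card {l // l ∈ O} = _ from hO.card_eq]
  ring

lemma card_t2Point_inc (hO : IsOval O H) (hl : T2Line O H l) :
    Nat.card {W : {W // T2Point O H W} // T2Inc W.1 l} = Fintype.card F + 1 := by
  rw [Nat.card_congr (Equiv.subtypeSubtypeEquivSubtypeInter (T2Point O H) (T2Inc · l))]
  rcases hl with (hl : IsAffineLine O H l) | hP
  · obtain ⟨t, ⟨ht, hPt⟩, -⟩ := hO.existsUnique_tangent hl.2.2
    have hplane := (hl.isTangentPlane_sup hO.finrank_plane ht hPt).1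
    rw [Nat.card_congr (Equiv.subtypeEquivRight (hO.t2Point_inc_iff_of_isAffineLine hl ht hPt)),
      card_subtype_or_of_disjoint fun W hW hWt => by
        have := hW.1.1
        rw [hWt, hplane.1] at this
        omega,
      card_subtype_of_iff_eq fun _ => Iff.rfl,
      ← card_finrank_eq_one_le_not_le hO.finrank_add_one hl.1 hl.2.1]
    exact congrArg (· + 1) (Nat.card_congr (Equiv.subtypeEquivRight fun x => by tauto))
  · obtain ⟨t, ⟨ht, hPt⟩, -⟩ := hO.existsUnique_tangent hP
    rw [Nat.card_congr (Equiv.subtypeEquivRight (hO.t2Point_inc_iff_of_mem hP ht hPt)),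
      card_subtype_or_of_disjoint fun W hW hWH => hW.2.2 hWH,
      card_subtype_of_iff_eq fun _ => Iff.rfl,
      ← card_finrank_eq_three_ge_ne (finrank_fin_fun F) hO.finrank_plane ht.1 ht.2.1]
    exact congrArg (· + 1) (Nat.card_congr (Equiv.subtypeEquivRight fun W => and_assoc.symm))

lemma card_t2Line_inc (hO : IsOval O H) (hW : T2Point O H W) :
    Nat.card {l : {l // T2Line O H l} // T2Inc W l.1} = Fintype.card F + 1 := by
  rw [Nat.card_congr (Equiv.subtypeSubtypeEquivSubtypeInter (T2Line O H) (T2Inc W ·))]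
  rcases hW with (hx : IsAffinePoint H W) | (hσ : IsTangentPlane O H W) | rfl
  · rw [Nat.card_congr (Equiv.subtypeEquivRight (hO.t2Line_inc_iff_of_isAffinePoint hx)),
      ← hO.card_eq]
    refine (Nat.card_congr (Equiv.ofBijective (fun Q : O =>
      ⟨W ⊔ Q, (hO.isAffineLine_sup hx Q.2).1, le_sup_left⟩) ⟨?_, ?_⟩)).symm
    · rintro ⟨Q, hQ⟩ ⟨Q', hQ'⟩ h
      have htrace : (W ⊔ Q) ⊓ H = (W ⊔ Q') ⊓ H := congrArg (·.1 ⊓ H) h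
      rw [(hO.isAffineLine_sup hx hQ).2, (hO.isAffineLine_sup hx hQ').2] at htrace
      exact Subtype.ext htrace
    · rintro ⟨m, hm, hxm⟩
      exact ⟨⟨m ⊓ H, hm.2.2⟩, Subtype.ext (eq_sup_of_finrank_eq_two hx.1
        (hO.finrank_eq_one _ hm.2.2) (fun h => hx.2 (h ▸ inf_le_right)) hm.1 hxm inf_le_left).symm⟩
  · obtain ⟨Q, ⟨hQ, hQσ⟩, -⟩ := hσ.2.2.2.2
    have hQ1 := hO.finrank_eq_one Q hQ
    rw [Nat.card_congr (Equiv.subtypeEquivRight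
        (hO.t2Line_inc_iff_of_isTangentPlane hσ hQ (hQσ.trans inf_le_left))),
      card_subtype_or_of_disjoint fun m hm hmQ => by
        have := hm.1
        rw [hmQ, hQ1] at this
        omega,
      card_subtype_of_iff_eq fun _ => Iff.rfl,
      ← card_finrank_eq_two_ge_le_not_le hO.finrank_add_one hσ.1 hσ.not_le hQ1
        (hQσ.trans inf_le_left) (hO.le_plane Q hQ)]
    exact congrArg (· + 1) (Nat.card_congr (Equiv.subtypeEquivRight fun m => by tauto))
  · rw [Nat.card_congr (Equiv.subtypeEquivRight hO.t2Line_inc_self_iff)]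
    exact hO.card_eq

end IsOval

end Oval

theorem stmt_15_general (F : Type*) [Field F] [Fintype F] (q : ℕ) (hq : Fintype.card F = q)
    (H : Submodule F (Fin 4 → F))
    (hH : H = LinearMap.ker (LinearMap.proj (3 : Fin 4) : (Fin 4 → F) →ₗ[F] F))
    (O : Set (Submodule F (Fin 4 → F)))
    (hO : ∀ P ∈ O, Module.finrank F P = 1 ∧ P ≤ H)
    (hOcard : Nat.card O = q + 1)
    (hOarc : ∀ P₁ ∈ O, ∀ P₂ ∈ O, ∀ P₃ ∈ O,
      P₁ ≠ P₂ → P₁ ≠ P₃ → P₂ ≠ P₃ → ¬ P₃ ≤ P₁ ⊔ P₂) :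
    Nat.card {W : Submodule F (Fin 4 → F) // T2Point O H W} = (q + 1) * (q ^ 2 + 1) ∧
    Nat.card {l : Submodule F (Fin 4 → F) // T2Line O H l} = (q + 1) * (q ^ 2 + 1) ∧
    (∀ l : {l : Submodule F (Fin 4 → F) // T2Line O H l},
      Nat.card {W : {W : Submodule F (Fin 4 → F) // T2Point O H W} //
        T2Inc W.1 l.1} = q + 1) ∧
    (∀ W : {W : Submodule F (Fin 4 → F) // T2Point O H W},
      Nat.card {l : {l : Submodule F (Fin 4 → F) // T2Line O H l} //
        T2Inc W.1 l.1} = q + 1) ∧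
    (∀ (W : {W : Submodule F (Fin 4 → F) // T2Point O H W})
        (l : {l : Submodule F (Fin 4 → F) // T2Line O H l}),
      ¬ T2Inc W.1 l.1 →
      ∃! W' : {W' : Submodule F (Fin 4 → F) // T2Point O H W'},
        T2Inc W'.1 l.1 ∧ ∃ m : {m : Submodule F (Fin 4 → F) // T2Line O H m},
          T2Inc W.1 m.1 ∧ T2Inc W'.1 m.1) := by
  subst hq
  have hOval : IsOval O H :=
    ⟨hH ▸ finrank_ker_proj 3, fun P hP => (hO P hP).1, fun P hP => (hO P hP).2, hOcard, hOarc⟩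
  refine ⟨hOval.card_t2Point, hOval.card_t2Line, fun l => hOval.card_t2Point_inc l.2,
    fun W => hOval.card_t2Line_inc W.2, fun W l hWl => ?_⟩
  obtain ⟨W', ⟨⟨hW', hW'l⟩, m, hm, hWm, hW'm⟩, hunique⟩ :=
    hOval.existsUnique_t2Collinear W.2 l.2 hWl
  refine ⟨⟨W', hW'⟩, ⟨hW'l, ⟨m, hm⟩, hWm, hW'm⟩, ?_⟩
  rintro ⟨W'', hW''⟩ ⟨hW''l, ⟨m', hm'⟩, hWm', hW''m'⟩
  exact Subtype.ext (hunique W'' ⟨⟨hW'', hW''l⟩, m', hm', hWm', hW''m'⟩)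

/-- The generalised quadrangle T_2(O) of Tits, constructed from a conic O in
a hyperplane PG(2,q) of PG(3,q), is a generalised quadrangle of order (q,q): it has
(q+1)(q^2+1) points and (q+1)(q^2+1) lines, each line has q+1 points, each point is on q+1
lines, and for every point P not on a line l there is a unique point of l collinear
with P. -/
theorem stmt_15 (F : Type*) [Field F] [Fintype F] (q : ℕ) (hq : Fintype.card F = q)
    (H : Submodule F (Fin 4 → F))
    (hH : H = LinearMap.ker (LinearMap.proj (3 : Fin 4) : (Fin 4 → F) →ₗ[F] F))
    (O : Set (Submodule F (Fin 4 → F)))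
    (hO : ∀ P ∈ O, Module.finrank F P = 1 ∧ P ≤ H)
    (hOcard : Nat.card O = q + 1)
    (hOarc : ∀ P₁ ∈ O, ∀ P₂ ∈ O, ∀ P₃ ∈ O,
      P₁ ≠ P₂ → P₁ ≠ P₃ → P₂ ≠ P₃ → ¬ P₃ ≤ P₁ ⊔ P₂)
    (hconic : ∃ Φ : QuadraticForm F (Fin 4 → F), ∀ P : Submodule F (Fin 4 → F),
      P ∈ O ↔ (Module.finrank F P = 1 ∧ P ≤ H ∧ ∀ v ∈ P, Φ v = 0)) :
    Nat.card {W : Submodule F (Fin 4 → F) // T2Point O H W} = (q + 1) * (q ^ 2 + 1) ∧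
    Nat.card {l : Submodule F (Fin 4 → F) // T2Line O H l} = (q + 1) * (q ^ 2 + 1) ∧
    (∀ l : {l : Submodule F (Fin 4 → F) // T2Line O H l},
      Nat.card {W : {W : Submodule F (Fin 4 → F) // T2Point O H W} //
        T2Inc W.1 l.1} = q + 1) ∧
    (∀ W : {W : Submodule F (Fin 4 → F) // T2Point O H W},
      Nat.card {l : {l : Submodule F (Fin 4 → F) // T2Line O H l} //
        T2Inc W.1 l.1} = q + 1) ∧
    (∀ (W : {W : Submodule F (Fin 4 → F) // T2Point O H W})
        (l : {l : Submodule F (Fin 4 → F) // T2Line O H l}),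
      ¬ T2Inc W.1 l.1 →
      ∃! W' : {W' : Submodule F (Fin 4 → F) // T2Point O H W'},
        T2Inc W'.1 l.1 ∧ ∃ m : {m : Submodule F (Fin 4 → F) // T2Line O H m},
          T2Inc W.1 m.1 ∧ T2Inc W'.1 m.1) :=
  stmt_15_general F q hq H hH O hO hOcard hOarc
end
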